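/- arXiv:math/9807148 — 2 statements merged into one kernel-verified Lean document; each statement's English description precedes it below -/
import Mathlib

section
/- Let 1 ≤ i, j ≤ n with i ≠ j, let 0 ≤ p ≤ 2n+1, and let γ ∈ ℤ^n. If v is a nonzero element of V^{p,n,γ} with U_{ij} v = 0, then γ_j ∈ {−1, 0, 1}. -/
open scoped TensorProduct

noncomputable section

namespace HeisenbergModel

variable (n : ℕ)

/-- Algebraic model of anti-Fock space: the polynomial algebra `ℂ[x_1,…,x_n]`. -/
abbrev P := MvPolynomial (Fin n) ℂ

/-- The `(2n+1)`-dimensional coefficient space with distinguished basis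
`τ^1,…,τ^n, τ^{1̄},…,τ^{n̄}, τ^w`. -/
abbrev Vc := Fin (2 * n + 1) → ℂ

/-- The exterior algebra `Λ = ⋀ V`. -/
abbrev Lam := ExteriorAlgebra ℂ (Vc n)

/-- The space `P_n ⊗ Λ` on which all operators act. -/
abbrev PL := P n ⊗[ℂ] Lam n

/-- Index of the basis vector `τ^j`. -/
def idx1 (j : Fin n) : Fin (2 * n + 1) := ⟨j.1, by omega⟩

/-- Index of the basis vector `τ^{j̄}`. -/
def idx2 (j : Fin n) : Fin (2 * n + 1) := ⟨n + j.1, by omega⟩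

/-- Index of the basis vector `τ^w`. -/
def idxw : Fin (2 * n + 1) := ⟨2 * n, by omega⟩

/-- The distinguished basis vectors of `V`. -/
def tau (i : Fin (2 * n + 1)) : Vc n := Pi.single i 1

/-- The dual-basis functionals on `V`. -/
def dualf (i : Fin (2 * n + 1)) : Module.Dual ℂ (Vc n) := LinearMap.proj i

/-- Annihilation operator `a_j = ∂/∂x_j` on `P_n`. -/
def aOp (j : Fin n) : P n →ₗ[ℂ] P n := (MvPolynomial.pderiv j).toLinearMap

/-- Creation operator `a_j^* = (multiplication by x_j)` on `P_n`. -/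
def aStarOp (j : Fin n) : P n →ₗ[ℂ] P n := LinearMap.mulLeft ℂ (MvPolynomial.X j)

/-- Left exterior multiplication `e(v)` on `Λ`. -/
def eMulV (v : Vc n) : Lam n →ₗ[ℂ] Lam n := LinearMap.mulLeft ℂ (ExteriorAlgebra.ι ℂ v)

/-- Interior multiplication (left contraction) by a dual functional on `Λ`. -/
def iMulF (f : Module.Dual ℂ (Vc n)) : Lam n →ₗ[ℂ] Lam n :=
  CliffordAlgebra.contractLeft (Q := (0 : QuadraticForm ℂ (Vc n))) f

/-- Lift an operator on `P_n` to `P_n ⊗ Λ` (acting on the first factor). -/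
def onP (f : P n →ₗ[ℂ] P n) : PL n →ₗ[ℂ] PL n := LinearMap.rTensor (Lam n) f

/-- Lift an operator on `Λ` to `P_n ⊗ Λ` (acting on the second factor). -/
def onL (f : Lam n →ₗ[ℂ] Lam n) : PL n →ₗ[ℂ] PL n := LinearMap.lTensor (P n) f

/-- `a_j` acting on `P_n ⊗ Λ`. -/
def A (j : Fin n) : PL n →ₗ[ℂ] PL n := onP n (aOp n j)

/-- `a_j^*` acting on `P_n ⊗ Λ`. -/
def Astar (j : Fin n) : PL n →ₗ[ℂ] PL n := onP n (aStarOp n j)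

/-- `e(τ^j)` acting on `P_n ⊗ Λ`. -/
def E1 (j : Fin n) : PL n →ₗ[ℂ] PL n := onL n (eMulV n (tau n (idx1 n j)))

/-- `e(τ^{j̄})` acting on `P_n ⊗ Λ`. -/
def E2 (j : Fin n) : PL n →ₗ[ℂ] PL n := onL n (eMulV n (tau n (idx2 n j)))

/-- `e(τ^w)` acting on `P_n ⊗ Λ`. -/
def Ew : PL n →ₗ[ℂ] PL n := onL n (eMulV n (tau n (idxw n)))

/-- `i(Z_j)` acting on `P_n ⊗ Λ`. -/
def I1 (j : Fin n) : PL n →ₗ[ℂ] PL n := onL n (iMulF n (dualf n (idx1 n j)))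

/-- `i(Z_{j̄})` acting on `P_n ⊗ Λ`. -/
def I2 (j : Fin n) : PL n →ₗ[ℂ] PL n := onL n (iMulF n (dualf n (idx2 n j)))

/-- `i(W)` acting on `P_n ⊗ Λ`. -/
def Iw : PL n →ₗ[ℂ] PL n := onL n (iMulF n (dualf n (idxw n)))

/-- `θ_j(t) = −√(−1)·√t·(e(τ^j) a_j^* + e(τ^{j̄}) a_j) − √(−1)·e(τ^j) e(τ^{j̄}) i(W)`. -/
def theta (t : ℝ) (j : Fin n) : PL n →ₗ[ℂ] PL n :=
  (-(Complex.I * (Real.sqrt t : ℝ))) • (E1 n j ∘ₗ Astar n j + E2 n j ∘ₗ A n j)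
    - Complex.I • (E1 n j ∘ₗ E2 n j ∘ₗ Iw n)

/-- `θ_j^†(t) = √(−1)·√t·(i(Z_j) a_j + i(Z_{j̄}) a_j^*) + √(−1)·e(τ^w) i(Z_{j̄}) i(Z_j)`. -/
def thetaDag (t : ℝ) (j : Fin n) : PL n →ₗ[ℂ] PL n :=
  (Complex.I * (Real.sqrt t : ℝ)) • (I1 n j ∘ₗ A n j + I2 n j ∘ₗ Astar n j)
    + Complex.I • (Ew n ∘ₗ I2 n j ∘ₗ I1 n j)

/-- `d(t) = Σ_j θ_j(t) − √(−1)·t·e(τ^w)`. -/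
def dOp (t : ℝ) : PL n →ₗ[ℂ] PL n :=
  (∑ j : Fin n, theta n t j) - (Complex.I * (t : ℝ)) • Ew n

/-- `U_{jj} = a_j^* a_j − e(τ^j) i(Z_j) + e(τ^{j̄}) i(Z_{j̄})`. -/
def Udiag (j : Fin n) : PL n →ₗ[ℂ] PL n :=
  Astar n j ∘ₗ A n j - E1 n j ∘ₗ I1 n j + E2 n j ∘ₗ I2 n j

/-- The `(i,j)` transposition operator `U_{ij} = a_i^* a_j − e(τ^j) i(Z_i) + e(τ^{ī}) i(Z_{j̄})`. -/
def Uoff (i j : Fin n) : PL n →ₗ[ℂ] PL n :=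
  Astar n i ∘ₗ A n j - E1 n j ∘ₗ I1 n i + E2 n i ∘ₗ I2 n j

/-- The degree-`p` component `Λ^p` of the exterior algebra, as a submodule. -/
def LamP (p : ℕ) : Submodule ℂ (Lam n) :=
  LinearMap.range (ExteriorAlgebra.ι ℂ : Vc n →ₗ[ℂ] Lam n) ^ p

/-- The subspace `P_n ⊗ Λ^p` of `P_n ⊗ Λ`. -/
def Wp (p : ℕ) : Submodule ℂ (PL n) :=
  LinearMap.range (TensorProduct.map (LinearMap.id : P n →ₗ[ℂ] P n) (LamP n p).subtype)

/-- The simultaneous eigenspace `V^{p,n,γ} = {v ∈ P_n ⊗ Λ^p : U_{jj} v = γ_j v for all j}`. -/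
def Vpγ (p : ℕ) (γ : Fin n → ℤ) : Submodule ℂ (PL n) :=
  Wp n p ⊓ ⨅ j : Fin n, Module.End.eigenspace (Udiag n j) ((γ j : ℂ))


section AuxLemmas

variable {n : ℕ}

lemma dualf_tau (a b : Fin (2 * n + 1)) :
    dualf n a (tau n b) = if a = b then 1 else 0 := by
  rcases eq_or_ne a b with h | h
  · subst h; simp [dualf, tau]
  · simp [dualf, tau, Pi.single_apply, h.symm, h]

/-- pointwise anticommutation of contraction past exterior multiplication -/
lemma pw_ie (f : Module.Dual ℂ (Vc n)) (u : Vc n) (x : Lam n) :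
    iMulF n f (eMulV n u x) = f u • x - eMulV n u (iMulF n f x) := by
  simpa [iMulF, eMulV] using
    CliffordAlgebra.contractLeft_ι_mul (d := f) u x

lemma pw_ee_self (u : Vc n) (x : Lam n) : eMulV n u (eMulV n u x) = 0 := by
  simp [eMulV, ← mul_assoc, ExteriorAlgebra.ι_sq_zero]

lemma pw_ee (u w : Vc n) (x : Lam n) :
    eMulV n u (eMulV n w x) = -(eMulV n w (eMulV n u x)) := by
  have h2 := ExteriorAlgebra.ι_sq_zero (R := ℂ) (u + w)
  rw [map_add, add_mul, mul_add, mul_add, ExteriorAlgebra.ι_sq_zero,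
    ExteriorAlgebra.ι_sq_zero, zero_add, add_zero] at h2
  have h : ExteriorAlgebra.ι ℂ u * ExteriorAlgebra.ι ℂ w
      = -(ExteriorAlgebra.ι ℂ w * ExteriorAlgebra.ι ℂ u) :=
    eq_neg_of_add_eq_zero_left h2
  simp [eMulV, ← mul_assoc, h]

lemma pw_ii_self (f : Module.Dual ℂ (Vc n)) (x : Lam n) :
    iMulF n f (iMulF n f x) = 0 :=
  CliffordAlgebra.contractLeft_contractLeft (d := f) x

lemma pw_ii (f g : Module.Dual ℂ (Vc n)) (x : Lam n) :
    iMulF n f (iMulF n g x) = -(iMulF n g (iMulF n f x)) :=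
  CliffordAlgebra.contractLeft_comm (d := f) (d' := g) x

/-- `(e_b ∘ i_a) ∘ (e_a ∘ i_a) = e_b ∘ i_a` on `Λ`. -/
lemma lam_absorb_left (a b : Fin (2 * n + 1)) :
    (eMulV n (tau n b) ∘ₗ iMulF n (dualf n a)) ∘ₗ (eMulV n (tau n a) ∘ₗ iMulF n (dualf n a))
      = eMulV n (tau n b) ∘ₗ iMulF n (dualf n a) := by
  refine LinearMap.ext fun x => ?_
  simp [LinearMap.comp_apply, pw_ie, dualf_tau, pw_ii_self]

/-- `(e_a ∘ i_a) ∘ (e_a ∘ i_b) = e_a ∘ i_b` on `Λ`. -/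
lemma lam_absorb_right (a b : Fin (2 * n + 1)) :
    (eMulV n (tau n a) ∘ₗ iMulF n (dualf n a)) ∘ₗ (eMulV n (tau n a) ∘ₗ iMulF n (dualf n b))
      = eMulV n (tau n a) ∘ₗ iMulF n (dualf n b) := by
  refine LinearMap.ext fun x => ?_
  simp [LinearMap.comp_apply, pw_ie, dualf_tau, pw_ee_self]

/-- `(e_a ∘ i_a) ∘ (e_b ∘ i_a) = 0` on `Λ` for `b ≠ a`. -/
lemma lam_zero_left (a b : Fin (2 * n + 1)) (h : b ≠ a) :
    (eMulV n (tau n a) ∘ₗ iMulF n (dualf n a)) ∘ₗ (eMulV n (tau n b) ∘ₗ iMulF n (dualf n a))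
      = 0 := by
  refine LinearMap.ext fun x => ?_
  simp [LinearMap.comp_apply, pw_ie, dualf_tau, Ne.symm h, pw_ii_self]

/-- `(e_a ∘ i_b) ∘ (e_a ∘ i_a) = 0` on `Λ` for `a ≠ b`. -/
lemma lam_zero_right (a b : Fin (2 * n + 1)) (h : a ≠ b) :
    (eMulV n (tau n a) ∘ₗ iMulF n (dualf n b)) ∘ₗ (eMulV n (tau n a) ∘ₗ iMulF n (dualf n a))
      = 0 := by
  refine LinearMap.ext fun x => ?_
  simp [LinearMap.comp_apply, pw_ie, dualf_tau, Ne.symm h, pw_ee_self]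

/-- `(e_a ∘ i_b)` and `(e_c ∘ i_d)` commute when `c ≠ b` and `a ≠ d`. -/
lemma lam_comm (a b c d : Fin (2 * n + 1)) (h1 : c ≠ b) (h2 : a ≠ d) :
    (eMulV n (tau n a) ∘ₗ iMulF n (dualf n b)) ∘ₗ (eMulV n (tau n c) ∘ₗ iMulF n (dualf n d))
      = (eMulV n (tau n c) ∘ₗ iMulF n (dualf n d)) ∘ₗ (eMulV n (tau n a) ∘ₗ iMulF n (dualf n b)) := by
  refine LinearMap.ext fun x => ?_
  simp only [LinearMap.comp_apply]
  rw [pw_ie, pw_ie, dualf_tau, dualf_tau, if_neg (Ne.symm h1), if_neg (Ne.symm h2)]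
  simp only [zero_smul, zero_sub, map_neg, neg_inj]
  rw [pw_ii (dualf n d) (dualf n b) x, map_neg, map_neg,
    pw_ee (tau n c) (tau n a)]
  simp

lemma onL_comp (f g : Lam n →ₗ[ℂ] Lam n) :
    onL n (f ∘ₗ g) = onL n f ∘ₗ onL n g :=
  LinearMap.lTensor_comp (P n) f g

lemma pw_PL (f : P n →ₗ[ℂ] P n) (g : Lam n →ₗ[ℂ] Lam n) (x : PL n) :
    onP n f (onL n g x) = onL n g (onP n f x) := by
  have h : (LinearMap.rTensor (Lam n) f) ∘ₗ (LinearMap.lTensor (P n) g)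
      = (LinearMap.lTensor (P n) g) ∘ₗ (LinearMap.rTensor (Lam n) f) :=
    TensorProduct.ext' fun p l => by simp
  exact LinearMap.congr_fun h x

lemma onP_comp (f g : P n →ₗ[ℂ] P n) :
    onP n (f ∘ₗ g) = onP n f ∘ₗ onP n g :=
  LinearMap.rTensor_comp (Lam n) f g

lemma onL_comp_apply (f g : Lam n →ₗ[ℂ] Lam n) (x : PL n) :
    onL n (f ∘ₗ g) x = onL n f (onL n g x) :=
  LinearMap.congr_fun (onL_comp f g) x

end AuxLemmas

set_option maxHeartbeats 2000000 in
/-- Kernel lemma: if `v` is a nonzero element of `V^{p,n,γ}` with `U_{ij} v = 0`,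
then `γ_j ∈ {−1, 0, 1}`. -/
theorem gamma_of_mem_ker_Uoff (n : ℕ) (hn : 1 ≤ n) (i j : Fin n) (hij : i ≠ j)
    (p : ℕ) (hp : p ≤ 2 * n + 1) (γ : Fin n → ℤ)
    (v : PL n) (hv : v ∈ Vpγ n p γ) (hv0 : v ≠ 0) (hker : Uoff n i j v = 0) :
    γ j = -1 ∨ γ j = 0 ∨ γ j = 1 := by
  classical
  -- distinctness of the four relevant basis indices
  have hvij : (i : ℕ) ≠ (j : ℕ) := fun h => hij (Fin.ext h)
  have hne1 : idx1 n i ≠ idx1 n j := by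
    intro h; have h' := congrArg Fin.val h; simp [idx1] at h'
    exact hvij h'
  have hne2 : idx2 n j ≠ idx1 n j := by
    intro h; have h' := congrArg Fin.val h; simp [idx1, idx2] at h'
    have := j.isLt; omega
  have hne3 : idx1 n i ≠ idx2 n j := by
    intro h; have h' := congrArg Fin.val h; simp [idx1, idx2] at h'
    have := i.isLt; omega
  have hne4 : idx2 n i ≠ idx2 n j := by
    intro h; have h' := congrArg Fin.val h; simp [idx1, idx2] at h'
    exact hvij h'
  have hne5 : idx2 n i ≠ idx1 n j := by
    intro h; have h' := congrArg Fin.val h; simp [idx1, idx2] at h'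
    have := j.isLt; omega
  -- the relevant operators
  set Q1 : PL n →ₗ[ℂ] PL n :=
    onL n (eMulV n (tau n (idx1 n j)) ∘ₗ iMulF n (dualf n (idx1 n j))) with hQ1def
  set Q2 : PL n →ₗ[ℂ] PL n :=
    onL n (eMulV n (tau n (idx2 n j)) ∘ₗ iMulF n (dualf n (idx2 n j))) with hQ2def
  set QA : PL n →ₗ[ℂ] PL n :=
    onL n (eMulV n (tau n (idx1 n j)) ∘ₗ iMulF n (dualf n (idx1 n i))) with hQAdef
  set QB : PL n →ₗ[ℂ] PL n :=
    onL n (eMulV n (tau n (idx2 n i)) ∘ₗ iMulF n (dualf n (idx2 n j))) with hQBdef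
  set NB : PL n →ₗ[ℂ] PL n := onP n (aStarOp n j ∘ₗ aOp n j) with hNBdef
  set XB : PL n →ₗ[ℂ] PL n := onP n (aStarOp n i ∘ₗ aOp n j) with hXBdef
  -- bridges to the operators of the statement
  have hQ1E : ∀ w : PL n, Q1 w = E1 n j (I1 n j w) := fun w => by
    rw [hQ1def]; exact onL_comp_apply _ _ w
  have hQ2E : ∀ w : PL n, Q2 w = E2 n j (I2 n j w) := fun w => by
    rw [hQ2def]; exact onL_comp_apply _ _ w
  have hQAE : ∀ w : PL n, QA w = E1 n j (I1 n i w) := fun w => by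
    rw [hQAdef]; exact onL_comp_apply _ _ w
  have hQBE : ∀ w : PL n, QB w = E2 n i (I2 n j w) := fun w => by
    rw [hQBdef]; exact onL_comp_apply _ _ w
  have hNBE : ∀ w : PL n, NB w = Astar n j (A n j w) := fun w => by
    rw [hNBdef, onP_comp]; rfl
  have hXBE : ∀ w : PL n, XB w = Astar n i (A n j w) := fun w => by
    rw [hXBdef, onP_comp]; rfl
  -- algebraic relations among the fermionic operators
  have hP11 : ∀ w, Q1 (Q1 w) = Q1 w := fun w => by
    rw [hQ1def, ← onL_comp_apply, lam_absorb_left]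
  have hP22 : ∀ w, Q2 (Q2 w) = Q2 w := fun w => by
    rw [hQ2def, ← onL_comp_apply, lam_absorb_left]
  have hP12 : ∀ w, Q1 (Q2 w) = Q2 (Q1 w) := fun w => by
    rw [hQ1def, hQ2def, ← onL_comp_apply, lam_comm _ _ _ _ hne2 hne2.symm, onL_comp_apply]
  have hA1 : ∀ w, Q1 (QA w) = QA w := fun w => by
    rw [hQ1def, hQAdef, ← onL_comp_apply, lam_absorb_right]
  have hA1' : ∀ w, QA (Q1 w) = 0 := fun w => by
    rw [hQAdef, hQ1def, ← onL_comp_apply, lam_zero_right _ _ hne1.symm]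
    simp [onL]
  have hA2 : ∀ w, Q2 (QA w) = QA (Q2 w) := fun w => by
    rw [hQ2def, hQAdef, ← onL_comp_apply, lam_comm _ _ _ _ hne2.symm hne3.symm, onL_comp_apply]
  have hB2 : ∀ w, QB (Q2 w) = QB w := fun w => by
    rw [hQBdef, hQ2def, ← onL_comp_apply, lam_absorb_left]
  have hB2' : ∀ w, Q2 (QB w) = 0 := fun w => by
    rw [hQ2def, hQBdef, ← onL_comp_apply, lam_zero_left _ _ hne4]
    simp [onL]
  have hB1 : ∀ w, Q1 (QB w) = QB (Q1 w) := fun w => by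
    rw [hQ1def, hQBdef, ← onL_comp_apply, lam_comm _ _ _ _ hne5 hne2.symm, onL_comp_apply]
  -- commutation of bosonic and fermionic operators
  have hCN1 : ∀ w, NB (Q1 w) = Q1 (NB w) := fun w => by
    rw [hNBdef, hQ1def]; exact pw_PL _ _ w
  have hCN2 : ∀ w, NB (Q2 w) = Q2 (NB w) := fun w => by
    rw [hNBdef, hQ2def]; exact pw_PL _ _ w
  have hCX1 : ∀ w, XB (Q1 w) = Q1 (XB w) := fun w => by
    rw [hXBdef, hQ1def]; exact pw_PL _ _ w
  have hCX2 : ∀ w, XB (Q2 w) = Q2 (XB w) := fun w => by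
    rw [hXBdef, hQ2def]; exact pw_PL _ _ w
  -- injectivity: `XB w = 0` forces `NB w = 0`
  have hinj : Function.Injective (Astar n i) := by
    have hX0 : Function.Injective (aStarOp n i) := by
      intro p q hpq
      simp only [aStarOp, LinearMap.mulLeft_apply] at hpq
      exact mul_left_cancel₀ (MvPolynomial.X_ne_zero i) hpq
    exact Module.Flat.rTensor_preserves_injective_linearMap (aStarOp n i) hX0
  have hXzero : ∀ w, XB w = 0 → NB w = 0 := by
    intro w hw
    have h1 : A n j w = 0 := hinj (by rw [← hXBE w, hw, map_zero])
    rw [hNBE w, h1, map_zero]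
  -- the eigenvalue equation
  set c0 : ℂ := (γ j : ℂ) with hc0
  have hvj : Udiag n j v = c0 • v :=
    Module.End.mem_eigenspace_iff.mp ((Submodule.mem_iInf _).mp hv.2 j)
  simp only [Udiag, LinearMap.sub_apply, LinearMap.add_apply, LinearMap.comp_apply] at hvj
  rw [← hQ1E v, ← hQ2E v, ← hNBE v] at hvj
  -- hvj : NB v - Q1 v + Q2 v = c0 • v
  have hNv : NB v = c0 • v + Q1 v - Q2 v := by rw [← hvj]; abel
  have hN2 : NB (Q2 v) = c0 • Q2 v + Q1 (Q2 v) - Q2 v := by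
    rw [hCN2 v, hNv, map_sub, map_add, map_smul, hP22 v, ← hP12 v]
  have hN1 : NB (Q1 v) = c0 • Q1 v + Q1 v - Q1 (Q2 v) := by
    rw [hCN1 v, hNv, map_sub, map_add, map_smul, hP11 v]
  have hN11 : NB (Q1 (Q2 v)) = c0 • Q1 (Q2 v) := by
    rw [hCN1 (Q2 v), hN2, map_sub, map_add, map_smul, hP11 (Q2 v)]; abel
  -- the kernel equation
  have hker' := hker
  simp only [Uoff, LinearMap.sub_apply, LinearMap.add_apply, LinearMap.comp_apply] at hker'
  rw [← hQAE v, ← hQBE v, ← hXBE v] at hker'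
  -- hker' : XB v - QA v + QB v = 0
  have hXv : XB v = QA v - QB v := by
    calc XB v = (XB v - QA v + QB v) + (QA v - QB v) := by abel
      _ = QA v - QB v := by rw [hker', zero_add]
  have hX2 : XB (Q2 v) = QA (Q2 v) := by
    rw [hCX2 v, hXv, map_sub, hB2' v, sub_zero, hA2 v]
  have hX11 : XB (Q1 (Q2 v)) = QA (Q2 v) := by
    rw [hCX1 (Q2 v), hX2, hA1 (Q2 v)]
  -- suppose towards a contradiction that γ j ∉ {−1, 0, 1}
  by_contra hcon
  push_neg at hcon
  obtain ⟨hm1, h0, h1⟩ := hcon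
  have hγ1 : c0 ≠ 1 := by rw [hc0]; exact_mod_cast h1
  have hc0' : c0 ≠ 0 := by rw [hc0]; exact_mod_cast h0
  have hγm1 : c0 ≠ -1 := by rw [hc0]; exact_mod_cast hm1
  have hc1 : c0 - 1 ≠ 0 := sub_ne_zero.mpr hγ1
  have hcm1 : c0 + 1 ≠ 0 := fun h => hγm1 (eq_neg_of_add_eq_zero_left h)
  have hsmul : ∀ (a : ℂ) (w : PL n), a ≠ 0 → a • w = 0 → w = 0 := by
    intro a w ha h
    have h2 := congrArg (fun z => a⁻¹ • z) h
    simpa [smul_smul, inv_mul_cancel₀ ha] using h2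
  -- step 1 : the component `Q2 v - Q1 (Q2 v)` (weight `c0 - 1`) vanishes
  have hw01X : XB (Q2 v - Q1 (Q2 v)) = 0 := by rw [map_sub, hX2, hX11, sub_self]
  have hw01e : (c0 - 1) • (Q2 v - Q1 (Q2 v)) = 0 := by
    have hh : NB (Q2 v - Q1 (Q2 v)) = (c0 - 1) • (Q2 v - Q1 (Q2 v)) := by
      rw [map_sub, hN2, hN11]; module
    rw [← hh]; exact hXzero _ hw01X
  have hw01 : Q2 v - Q1 (Q2 v) = 0 := hsmul _ _ hc1 hw01e
  -- step 2 : the component `Q1 (Q2 v)` (weight `c0`) vanishes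
  have hQAw01 : QA (Q2 v) = 0 := by
    have hh : QA (Q2 v - Q1 (Q2 v)) = QA (Q2 v) := by
      rw [map_sub, hA1' (Q2 v), sub_zero]
    rw [← hh, hw01, map_zero]
  have hv11 : Q1 (Q2 v) = 0 := by
    have hh : c0 • Q1 (Q2 v) = 0 := by
      rw [← hN11]; exact hXzero _ (by rw [hX11, hQAw01])
    exact hsmul _ _ hc0' hh
  have hQ2v0 : Q2 v = 0 := by
    have := sub_eq_zero.mp hw01
    rw [this, hv11]
  -- step 3 : the component `v - Q1 v` (weight `c0`) vanishes
  have hQBv : QB v = 0 := by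
    have hh := hB2 v
    rw [hQ2v0, map_zero] at hh
    exact hh.symm
  have hQBQ1v : QB (Q1 v) = 0 := by rw [← hB1 v, hQBv, map_zero]
  have hX1 : XB (Q1 v) = QA v - QB (Q1 v) := by
    rw [hCX1 v, hXv, map_sub, hA1 v, hB1 v]
  have hXu : XB (v - Q1 v) = 0 := by
    rw [map_sub, hXv, hX1, hQBv, hQBQ1v]; simp
  have hNu : NB (v - Q1 v) = c0 • (v - Q1 v) := by
    rw [map_sub, hNv, hN1, hv11, hQ2v0]; module
  have hu : v - Q1 v = 0 := by
    have hh : c0 • (v - Q1 v) = 0 := by rw [← hNu]; exact hXzero _ hXu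
    exact hsmul _ _ hc0' hh
  -- step 4 : the component `Q1 v` (weight `c0 + 1`) vanishes
  have hQAv : QA v = 0 := by
    have hh : QA (v - Q1 v) = QA v := by rw [map_sub, hA1' v, sub_zero]
    rw [← hh, hu, map_zero]
  have hXQ1 : XB (Q1 v) = 0 := by rw [hX1, hQAv, hQBQ1v, sub_zero]
  have hQ1v0 : Q1 v = 0 := by
    have hh : (c0 + 1) • Q1 v = 0 := by
      have h2 : NB (Q1 v) = (c0 + 1) • Q1 v := by rw [hN1, hv11]; module
      rw [← h2]; exact hXzero _ hXQ1
    exact hsmul _ _ hcm1 hh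
  -- conclusion : `v = 0`, contradiction
  apply hv0
  have : v = (v - Q1 v) + Q1 v := by abel
  rw [this, hu, hQ1v0, add_zero]


end HeisenbergModel
end
end

section
/- Fix 0 ≤ p ≤ 2n+1 and let S := {γ ∈ ℤ^n : γ_j ≥ −1 for all j, and at most p of the coordinates γ_j equal −1}. Then P_n ⊗ Λ^p decomposes as the (internal) direct sum of the subspaces V^{p,n,γ} over γ ∈ S: the subspaces V^{p,n,γ} for γ ∈ S are linearly independent and their sum is all of P_n ⊗ Λ^p. -/
open scoped TensorProduct

noncomputable section

/-! Write `U_{jj} = a_j^* a_j ⊗ 1 + 1 ⊗ (N_{j̄} − N_j)` with the number operators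
`N_k = e(τ^k) i(Z_k)`. Number operators of distinct basis vectors commute, hence so do the
`U_{jj}`, and joint eigenspaces of commuting operators are independent. Conversely
`x^α ⊗ τ^{r_1} ∧ ⋯ ∧ τ^{r_p}` is a joint eigenvector with eigenvalue
`α_j − [τ^j occurs] + [τ^{j̄} occurs] ≥ −1`, which can only be `−1` when `τ^j` is one of the
`p` factors; these vectors span `P_n ⊗ Λ^p`. -/

namespace ExteriorAlgebra

variable {R M : Type*} [CommRing R] [AddCommGroup M] [Module R M]

def numberOp (v : M) (f : Module.Dual R M) : Module.End R (ExteriorAlgebra R M) :=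
  LinearMap.mulLeft R (ι R v) ∘ₗ CliffordAlgebra.contractLeft (Q := 0) f

theorem numberOp_apply (v : M) (f : Module.Dual R M) (x : ExteriorAlgebra R M) :
    numberOp v f x = ι R v * CliffordAlgebra.contractLeft (Q := 0) f x := rfl

theorem numberOp_ι_mul_self {v : M} {f : Module.Dual R M} (hf : f v = 1)
    (x : ExteriorAlgebra R M) : numberOp v f (ι R v * x) = ι R v * x := by
  rw [numberOp_apply, CliffordAlgebra.contractLeft_ι_mul, hf, one_smul, mul_sub, ← mul_assoc,
    ι_sq_zero, zero_mul, sub_zero]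

theorem numberOp_ι_mul_of_apply_eq_zero (v : M) {f : Module.Dual R M} {w : M} (hf : f w = 0)
    (x : ExteriorAlgebra R M) : numberOp v f (ι R w * x) = ι R w * numberOp v f x := by
  rw [numberOp_apply, CliffordAlgebra.contractLeft_ι_mul, hf, zero_smul, zero_sub, mul_neg,
    ← mul_assoc, ← neg_mul, ← eq_neg_of_add_eq_zero_left (ι_add_mul_swap w v), mul_assoc,
    numberOp_apply]

open scoped Classical in
theorem numberOp_list_prod {v : M} {f : Module.Dual R M} (hf : f v = 1) (L : List M)
    (hL : ∀ w ∈ L, w ≠ v → f w = 0) :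
    numberOp v f (L.map (ι R)).prod = (if v ∈ L then 1 else 0 : R) • (L.map (ι R)).prod := by
  induction L with
  | nil => simp [numberOp_apply]
  | cons w L ih =>
    simp only [List.forall_mem_cons] at hL
    rw [List.map_cons, List.prod_cons]
    by_cases hw : w = v
    · subst hw
      rw [numberOp_ι_mul_self hf, if_pos List.mem_cons_self, one_smul]
    · rw [numberOp_ι_mul_of_apply_eq_zero v (hL.1 hw), ih hL.2, mul_smul_comm]
      simp [Ne.symm hw]

open scoped Classical in
theorem numberOp_ιMulti {v : M} {f : Module.Dual R M} (hf : f v = 1) {k : ℕ} (w : Fin k → M)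
    (hw : ∀ i, w i ≠ v → f (w i) = 0) :
    numberOp v f (ιMulti R k w) = (if v ∈ Set.range w then 1 else 0 : R) • ιMulti R k w := by
  have h := numberOp_list_prod hf (List.ofFn w) (by simpa using hw)
  rw [ιMulti_apply]
  simp only [List.map_ofFn, List.mem_ofFn, Function.comp_def] at h
  convert h
  exact Set.mem_range

theorem numberOp_commute {v w : M} {f g : Module.Dual R M} (hfw : f w = 0) (hgv : g v = 0) :
    Commute (numberOp v f) (numberOp w g) := by
  have swap : ∀ (v w : M) (f g : Module.Dual R M), f w = 0 → ∀ x,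
      numberOp v f (numberOp w g x) = ι R w * ι R v *
        CliffordAlgebra.contractLeft (Q := 0) f (CliffordAlgebra.contractLeft (Q := 0) g x) := by
    intro v w f g hfw x
    rw [numberOp_apply w, numberOp_ι_mul_of_apply_eq_zero v hfw, numberOp_apply, mul_assoc]
  refine LinearMap.ext fun x => ?_
  rw [Module.End.mul_apply, Module.End.mul_apply, swap v w f g hfw, swap w v g f hgv,
    CliffordAlgebra.contractLeft_comm, eq_neg_of_add_eq_zero_left (ι_add_mul_swap w v),
    neg_mul_neg]

end ExteriorAlgebra

namespace MvPolynomial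

variable {σ R : Type*} [CommSemiring R]

def xPderiv (i : σ) : Module.End R (MvPolynomial σ R) :=
  LinearMap.mulLeft R (X i) ∘ₗ (pderiv i).toLinearMap

theorem xPderiv_monomial (i : σ) (α : σ →₀ ℕ) (c : R) :
    xPderiv i (monomial α c) = α i • monomial α c :=
  X_mul_pderiv_monomial

theorem commute_xPderiv (i j : σ) :
    Commute (xPderiv i : Module.End R (MvPolynomial σ R)) (xPderiv j) := by
  refine linearMap_ext fun α => LinearMap.ext fun c => ?_
  simp only [LinearMap.comp_apply, Module.End.mul_apply, xPderiv_monomial, map_nsmul, smul_smul,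
    mul_comm]

end MvPolynomial

theorem LinearMap.commute_rTensor_add_lTensor {R M N : Type*} [CommSemiring R]
    [AddCommMonoid M] [Module R M] [AddCommMonoid N] [Module R N]
    {f₁ f₂ : Module.End R M} {g₁ g₂ : Module.End R N} (hf : Commute f₁ f₂) (hg : Commute g₁ g₂) :
    Commute (f₁.rTensor N + g₁.lTensor M) (f₂.rTensor N + g₂.lTensor M) := by
  have hfg : ∀ (f : Module.End R M) (g : Module.End R N), Commute (f.rTensor N) (g.lTensor M) :=
    fun f g => (rTensor_comp_lTensor (f := f) (g := g)).trans
      (lTensor_comp_rTensor (f := f) (g := g)).symm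
  have hff : Commute (f₁.rTensor N) (f₂.rTensor N) := by
    rw [Commute, SemiconjBy, ← rTensor_mul, ← rTensor_mul, hf.eq]
  have hgg : Commute (g₁.lTensor M) (g₂.lTensor M) := by
    rw [Commute, SemiconjBy, ← lTensor_mul, ← lTensor_mul, hg.eq]
  exact (hff.add_left (hfg f₂ g₁).symm).add_right ((hfg f₁ g₂).add_left hgg)

theorem Module.End.iSupIndep_iInf_eigenspace_of_commute {ι R M : Type*} [CommRing R]
    [IsDomain R] [AddCommGroup M] [Module R M] [Module.IsTorsionFree R M]
    (f : ι → Module.End R M) (h : ∀ i j, Commute (f i) (f j)) :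
    iSupIndep fun χ : ι → R => ⨅ i, (f i).eigenspace (χ i) :=
  (independent_iInf_maxGenEigenspace_of_forall_mapsTo f
    fun i j φ => mapsTo_maxGenEigenspace_of_comm (h j i) φ).mono
    fun _ => iInf_mono fun _ => eigenspace_le_maxGenEigenspace

namespace HeisenbergModel

open ExteriorAlgebra MvPolynomial

variable (n : ℕ)

theorem idx1_injective : Function.Injective (idx1 n) :=
  fun _ _ h => Fin.ext (Fin.mk.inj h)

theorem idx2_injective : Function.Injective (idx2 n) :=
  fun _ _ h => Fin.ext (Nat.add_left_cancel (Fin.mk.inj h))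

theorem idx1_ne_idx2 (i j : Fin n) : idx1 n i ≠ idx2 n j :=
  fun h => absurd (Fin.mk.inj h) (by omega)

theorem dualf_tau_self (k : Fin (2 * n + 1)) : dualf n k (tau n k) = 1 :=
  Pi.single_eq_same k 1

theorem dualf_tau_of_ne {k m : Fin (2 * n + 1)} (h : k ≠ m) : dualf n k (tau n m) = 0 :=
  Pi.single_eq_of_ne h 1

theorem tau_injective : Function.Injective (tau n) := fun a b hab => by
  by_contra hne
  simpa [hab, dualf_tau_of_ne n hne] using dualf_tau_self n a

theorem commute_numberOp_tau {a b : Fin (2 * n + 1)} (h : a ≠ b) :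
    Commute (numberOp (tau n a) (dualf n a)) (numberOp (tau n b) (dualf n b)) :=
  numberOp_commute (dualf_tau_of_ne n h) (dualf_tau_of_ne n h.symm)

theorem span_range_tau : Submodule.span ℂ (Set.range (tau n)) = ⊤ := by
  have h : ⇑(Pi.basisFun ℂ (Fin (2 * n + 1))) = tau n := funext fun _ => Pi.basisFun_apply _ _ _
  rw [← h, Module.Basis.span_eq]

def exteriorPart (j : Fin n) : Module.End ℂ (Lam n) :=
  numberOp (tau n (idx2 n j)) (dualf n (idx2 n j))
    - numberOp (tau n (idx1 n j)) (dualf n (idx1 n j))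

theorem Udiag_eq_rTensor_add_lTensor (j : Fin n) :
    Udiag n j = (xPderiv j).rTensor (Lam n) + (exteriorPart n j).lTensor (P n) := by
  refine TensorProduct.ext' fun m w => ?_
  simp only [Udiag, exteriorPart, Astar, A, E1, E2, I1, I2, onP, onL, xPderiv, numberOp, aOp,
    aStarOp, eMulV, iMulF, LinearMap.add_apply, LinearMap.sub_apply, LinearMap.comp_apply,
    LinearMap.rTensor_tmul, LinearMap.lTensor_tmul, TensorProduct.tmul_sub]
  abel

theorem commute_exteriorPart (i j : Fin n) : Commute (exteriorPart n i) (exteriorPart n j) := by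
  rcases eq_or_ne i j with rfl | hij
  · exact Commute.refl _
  exact .sub_left
    ((commute_numberOp_tau n ((idx2_injective n).ne hij)).sub_right
      (commute_numberOp_tau n (idx1_ne_idx2 n j i).symm))
    ((commute_numberOp_tau n (idx1_ne_idx2 n i j)).sub_right
      (commute_numberOp_tau n ((idx1_injective n).ne hij)))

theorem commute_Udiag (i j : Fin n) : Commute (Udiag n i) (Udiag n j) := by
  rw [Udiag_eq_rTensor_add_lTensor, Udiag_eq_rTensor_add_lTensor]
  exact LinearMap.commute_rTensor_add_lTensor (commute_xPderiv i j) (commute_exteriorPart n i j)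

theorem iSupIndep_Vpγ (p : ℕ) : iSupIndep (Vpγ n p) := by
  have hcast : Function.Injective fun γ : Fin n → ℤ => ((↑) ∘ γ : Fin n → ℂ) :=
    Int.cast_injective.comp_left
  exact ((Module.End.iSupIndep_iInf_eigenspace_of_commute (Udiag n) (commute_Udiag n)).comp
    hcast).mono fun _ => inf_le_right

/-- The index set `S`. -/
def Admissible (p : ℕ) (γ : Fin n → ℤ) : Prop :=
  (∀ j, -1 ≤ γ j) ∧ (Finset.univ.filter fun j => γ j = -1).card ≤ p

/-- The joint eigenvalue of `U_{11}, …, U_{nn}` on `x^α ⊗ τ^{r 0} ∧ ⋯ ∧ τ^{r (p-1)}`. -/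
def weight {p : ℕ} (α : Fin n →₀ ℕ) (r : Fin p → Fin (2 * n + 1)) (j : Fin n) : ℤ :=
  α j - (if idx1 n j ∈ Set.range r then 1 else 0) + (if idx2 n j ∈ Set.range r then 1 else 0)

theorem idx1_mem_range_of_weight_eq_neg_one {p : ℕ} {α : Fin n →₀ ℕ}
    {r : Fin p → Fin (2 * n + 1)} {j : Fin n} (h : weight n α r j = -1) :
    idx1 n j ∈ Set.range r := by
  by_contra hj
  rw [weight, if_neg hj] at h
  split_ifs at h <;> omega

theorem admissible_weight {p : ℕ} (α : Fin n →₀ ℕ) (r : Fin p → Fin (2 * n + 1)) :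
    Admissible n p (weight n α r) := by
  refine ⟨fun j => by unfold weight; split_ifs <;> omega, ?_⟩
  calc (Finset.univ.filter fun j => weight n α r j = -1).card
      ≤ (Finset.univ.image r).card := by
        refine Finset.card_le_card_of_injOn (idx1 n) (fun j hj => ?_) (idx1_injective n).injOn
        simpa using idx1_mem_range_of_weight_eq_neg_one n (Finset.mem_filter.1 hj).2
    _ ≤ p := Finset.card_image_le.trans (Finset.card_fin p).le

theorem monomial_tmul_ιMulti_mem_Vpγ {p : ℕ} (α : Fin n →₀ ℕ) (r : Fin p → Fin (2 * n + 1)) :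
    monomial α 1 ⊗ₜ[ℂ] ιMulti ℂ p (tau n ∘ r) ∈ Vpγ n p (weight n α r) := by
  refine ⟨⟨_ ⊗ₜ[ℂ] ⟨_, ιMulti_range ℂ p ⟨_, rfl⟩⟩, rfl⟩, Submodule.mem_iInf _ |>.2 fun j => ?_⟩
  have hr : ∀ k, tau n k ∈ Set.range (tau n ∘ r) ↔ k ∈ Set.range r := fun k => by
    rw [Set.range_comp, (tau_injective n).mem_set_image]
  have hw : ∀ k i, (tau n ∘ r) i ≠ tau n k → dualf n k ((tau n ∘ r) i) = 0 :=
    fun k i h => dualf_tau_of_ne n fun hk => h (hk ▸ rfl)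
  rw [Module.End.mem_eigenspace_iff, Udiag_eq_rTensor_add_lTensor, LinearMap.add_apply,
    LinearMap.rTensor_tmul, LinearMap.lTensor_tmul, xPderiv_monomial, exteriorPart,
    LinearMap.sub_apply, numberOp_ιMulti (dualf_tau_self n _) _ (hw _),
    numberOp_ιMulti (dualf_tau_self n _) _ (hw _)]
  simp only [hr, weight, ← Nat.cast_smul_eq_nsmul ℂ, ← TensorProduct.smul_tmul',
    TensorProduct.tmul_sub, TensorProduct.tmul_smul]
  push_cast [apply_ite (Int.cast : ℤ → ℂ)]
  module

theorem Wp_le_iSup_Vpγ (p : ℕ) : Wp n p ≤ ⨆ γ : {γ // Admissible n p γ}, Vpγ n p γ.1 := by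
  have hLamP :
      LamP n p = Submodule.span ℂ (ιMulti ℂ p '' {a | Set.range a ⊆ Set.range (tau n)}) :=
    (exteriorPower.ιMulti_span_fixedDegree_of_span_eq_top ℂ p (Vc n) (span_range_tau n)).symm
  rw [Wp, TensorProduct.range_map, LinearMap.range_id, Submodule.range_subtype, hLamP,
    ← (basisMonomials (Fin n) ℂ).span_eq, Submodule.map₂_span_span, Submodule.span_le]
  rintro _ ⟨_, ⟨α, rfl⟩, _, ⟨a, ha, rfl⟩, rfl⟩
  obtain ⟨r, rfl⟩ := Set.range_subset_range_iff_exists_comp.mp ha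
  rw [coe_basisMonomials]
  exact le_iSup (fun γ : {γ // Admissible n p γ} => Vpγ n p γ.1) ⟨_, admissible_weight n α r⟩
    (monomial_tmul_ιMulti_mem_Vpγ n α r)

theorem Vpγ_internal_direct_sum_general (n : ℕ) (p : ℕ) :
    iSupIndep (fun γ : {γ : Fin n → ℤ // (∀ j, -1 ≤ γ j) ∧
        (Finset.univ.filter fun j => γ j = -1).card ≤ p} => Vpγ n p γ.1) ∧
    (⨆ γ : {γ : Fin n → ℤ // (∀ j, -1 ≤ γ j) ∧
        (Finset.univ.filter fun j => γ j = -1).card ≤ p}, Vpγ n p γ.1) = Wp n p :=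
  ⟨(iSupIndep_Vpγ n p).comp Subtype.val_injective,
    le_antisymm (iSup_le fun _ => inf_le_left) (Wp_le_iSup_Vpγ n p)⟩

/-- For `S = {γ ∈ ℤ^n : γ_j ≥ −1 for all j, and at most p of the γ_j equal −1}`, the space
`P_n ⊗ Λ^p` is the internal direct sum of the subspaces `V^{p,n,γ}`, `γ ∈ S`: the family
is independent and its supremum is all of `P_n ⊗ Λ^p`. -/
theorem Vpγ_internal_direct_sum (n : ℕ) (hn : 1 ≤ n) (p : ℕ) (hp : p ≤ 2 * n + 1) :
    iSupIndep (fun γ : {γ : Fin n → ℤ // (∀ j, -1 ≤ γ j) ∧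
        (Finset.univ.filter fun j => γ j = -1).card ≤ p} => Vpγ n p γ.1) ∧
    (⨆ γ : {γ : Fin n → ℤ // (∀ j, -1 ≤ γ j) ∧
        (Finset.univ.filter fun j => γ j = -1).card ≤ p}, Vpγ n p γ.1) = Wp n p :=
  Vpγ_internal_direct_sum_general n p

end HeisenbergModel
end
end
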